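/- Let φ : X → Y be a continuous surjection between compact Hausdorff spaces. Then φ is irreducible if and only if the induced map 2^φ : 2^X → 2^Y, K ↦ φ[K], is irreducible. -/

import Mathlib

/-- The hyperspace `2^X` of all nonempty closed subsets of `X`. -/
def Hyper (X : Type*) [TopologicalSpace X] : Type _ := {K : Set X // IsClosed K ∧ K.Nonempty}

/-- The Vietoris topology on the hyperspace, generated by the subbasic sets
`{K | K ⊆ U}` and `{K | K ∩ U ≠ ∅}` for `U` open. -/
instance Hyper.instTopologicalSpace (X : Type*) [TopologicalSpace X] :
    TopologicalSpace (Hyper X) :=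
  TopologicalSpace.generateFrom
    ({S | ∃ U : Set X, IsOpen U ∧ S = {K : Hyper X | K.1 ⊆ U}} ∪
     {S | ∃ U : Set X, IsOpen U ∧ S = {K : Hyper X | (K.1 ∩ U).Nonempty}})

/-- The induced map `2^f : 2^X → 2^Y`, `K ↦ f[K]`.  (For closed subsets of a compact
space and continuous `f` into a Hausdorff space the image `f[K]` is closed, so taking
the closure below is redundant and this is indeed `K ↦ f[K]`.) -/
def hyperMap {X Y : Type*} [TopologicalSpace X] [TopologicalSpace Y] (f : X → Y) :
    Hyper X → Hyper Y :=
  fun K => ⟨closure (f '' K.1), isClosed_closure, (K.2.2.image f).closure⟩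

/-- A continuous surjection `φ : X → Y` is *irreducible* if the only nonempty closed
subset `A ⊆ X` with `φ[A] = Y` is `A = X`. -/
def IrreducibleMap {X Y : Type*} [TopologicalSpace X] [TopologicalSpace Y]
    (φ : X → Y) : Prop :=
  ∀ A : Set X, IsClosed A → A.Nonempty → φ '' A = Set.univ → A = Set.univ

/-!
If `φ` is irreducible, every nonempty open `U ⊆ X` contains a whole fibre of `φ`. Given a
closed `𝒜 ⊆ 2^X` with `φ[𝒜] = 2^Y` and some `K₀ ∉ 𝒜`, take a Vietoris box
`⟨W; U₁, …, Uₙ⟩ ∋ K₀` missing `𝒜` and fibres `φ⁻¹(y₀) ⊆ W`, `φ⁻¹(yᵢ) ⊆ Uᵢ ∩ W`.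
A `K ∈ 𝒜` with `φ[K] = {y₀, …, yₙ}` then lies in the box, a contradiction.

Conversely, if `A` is closed with `φ[A] = Y`, then `{K | K ⊆ A}` is closed in `2^X` and
maps onto `2^Y` via `L ↦ A ∩ φ⁻¹(L)`; so it is all of `2^X`, and `A = X`.
-/

open Set

namespace Hyper

variable {X : Type*} [TopologicalSpace X]

theorem isOpen_setOf_inter_nonempty {U : Set X} (hU : IsOpen U) :
    IsOpen {K : Hyper X | (K.1 ∩ U).Nonempty} :=
  TopologicalSpace.isOpen_generateFrom_of_mem (Or.inr ⟨U, hU, rfl⟩)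

theorem isClosed_setOf_subset {A : Set X} (hA : IsClosed A) :
    IsClosed {K : Hyper X | K.1 ⊆ A} := by
  have : {K : Hyper X | K.1 ⊆ A}ᶜ = {K | (K.1 ∩ Aᶜ).Nonempty} := by
    ext K
    simp [not_subset, Set.Nonempty]
  rw [← isOpen_compl_iff, this]
  exact isOpen_setOf_inter_nonempty hA.isOpen_compl

/-- The paper's basic open set `⟨U₁, …, Uₙ⟩` is `box (U₁ ∪ ⋯ ∪ Uₙ) {U₁, …, Uₙ}`. -/
def box (W : Set X) (𝒰 : Set (Set X)) : Set (Hyper X) :=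
  {K | K.1 ⊆ W ∧ ∀ U ∈ 𝒰, (K.1 ∩ U).Nonempty}

theorem exists_box_subset_of_isOpen {𝒪 : Set (Hyper X)} (h𝒪 : IsOpen 𝒪) {K : Hyper X}
    (hK : K ∈ 𝒪) : ∃ (W : Set X) (𝒰 : Set (Set X)), IsOpen W ∧ 𝒰.Finite ∧
      (∀ U ∈ 𝒰, IsOpen U) ∧ K ∈ box W 𝒰 ∧ box W 𝒰 ⊆ 𝒪 := by
  induction h𝒪 generalizing K with
  | basic 𝒪 h𝒪 =>
    rcases h𝒪 with ⟨U, hU, rfl⟩ | ⟨U, hU, rfl⟩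
    · exact ⟨U, ∅, hU, finite_empty, by simp, ⟨hK, by simp⟩, fun L hL => hL.1⟩
    · refine ⟨univ, {U}, isOpen_univ, finite_singleton U, by simpa using hU,
        ⟨subset_univ _, by simpa using hK⟩, fun L hL => hL.2 U rfl⟩
  | univ =>
    exact ⟨univ, ∅, isOpen_univ, finite_empty, by simp, ⟨subset_univ _, by simp⟩,
      subset_univ _⟩
  | inter 𝒪₁ 𝒪₂ _ _ ih₁ ih₂ =>
    obtain ⟨W₁, 𝒰₁, hW₁, h𝒰₁, hU₁, hK₁, hsub₁⟩ := ih₁ hK.1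
    obtain ⟨W₂, 𝒰₂, hW₂, h𝒰₂, hU₂, hK₂, hsub₂⟩ := ih₂ hK.2
    refine ⟨W₁ ∩ W₂, 𝒰₁ ∪ 𝒰₂, hW₁.inter hW₂, h𝒰₁.union h𝒰₂,
      fun U hU => hU.elim (hU₁ U) (hU₂ U),
      ⟨subset_inter hK₁.1 hK₂.1, fun U hU => hU.elim (hK₁.2 U) (hK₂.2 U)⟩,
      fun L hL => ⟨hsub₁ ?_, hsub₂ ?_⟩⟩
    · exact ⟨hL.1.trans inter_subset_left, fun U hU => hL.2 U (Or.inl hU)⟩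
    · exact ⟨hL.1.trans inter_subset_right, fun U hU => hL.2 U (Or.inr hU)⟩
  | sUnion 𝒮 _ ih =>
    obtain ⟨𝒪, h𝒪, hK𝒪⟩ := hK
    obtain ⟨W, 𝒰, hW, h𝒰, hU, hKbox, hsub⟩ := ih 𝒪 h𝒪 hK𝒪
    exact ⟨W, 𝒰, hW, h𝒰, hU, hKbox, hsub.trans (subset_sUnion_of_mem h𝒪)⟩

end Hyper

theorem eq_of_closure_eq_of_finite {Y : Type*} [TopologicalSpace Y] [T1Space Y]
    {s t : Set Y} (ht : t.Finite) (h : closure s = t) : s = t := by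
  have hs : s.Finite := ht.subset (h ▸ subset_closure)
  rwa [hs.isClosed.closure_eq] at h

namespace IrreducibleMap

variable {X Y : Type*} [TopologicalSpace X] [TopologicalSpace Y] {φ : X → Y}

theorem exists_preimage_singleton_subset (h : IrreducibleMap φ) {U : Set X} (hU : IsOpen U)
    (hne : U.Nonempty) : ∃ y, φ ⁻¹' {y} ⊆ U := by
  rcases (Uᶜ).eq_empty_or_nonempty with hUc | hUc
  · obtain ⟨x, -⟩ := hne
    exact ⟨φ x, by simp [compl_empty_iff.mp hUc]⟩
  · have himg : φ '' Uᶜ ≠ univ := fun himg => by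
      obtain ⟨x, hx⟩ := hne
      exact (h Uᶜ hU.isClosed_compl hUc himg ▸ mem_univ x : x ∈ Uᶜ) hx
    obtain ⟨y, hy⟩ := (ne_univ_iff_exists_notMem _).mp himg
    exact ⟨y, fun x hx => by_contra fun hxU => hy ⟨x, hxU, hx⟩⟩

theorem hyperMap [T1Space Y] (h : IrreducibleMap φ) : IrreducibleMap (_root_.hyperMap φ) := by
  intro 𝒜 h𝒜 _ h𝒜φ
  by_contra hne
  obtain ⟨K₀, hK₀⟩ := (ne_univ_iff_exists_notMem _).mp hne
  obtain ⟨W, 𝒰, hW, h𝒰, hU, ⟨hK₀W, hK₀U⟩, hbox⟩ :=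
    Hyper.exists_box_subset_of_isOpen h𝒜.isOpen_compl hK₀
  obtain ⟨y₀, hy₀⟩ := h.exists_preimage_singleton_subset hW (K₀.2.2.mono hK₀W)
  have hUW (U : 𝒰) : (U.1 ∩ W).Nonempty := by
    obtain ⟨x, hxK, hxU⟩ := hK₀U U U.2
    exact ⟨x, hxU, hK₀W hxK⟩
  choose y hy using fun U : 𝒰 =>
    h.exists_preimage_singleton_subset ((hU U U.2).inter hW) (hUW U)
  have : Finite 𝒰 := h𝒰.to_subtype
  have hF : (insert y₀ (range y)).Finite := (finite_range y).insert y₀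
  let F : Hyper Y := ⟨insert y₀ (range y), hF.isClosed, insert_nonempty _ _⟩
  obtain ⟨K, hK𝒜, hK⟩ : F ∈ _root_.hyperMap φ '' 𝒜 := h𝒜φ ▸ mem_univ F
  have hKF : φ '' K.1 = insert y₀ (range y) :=
    eq_of_closure_eq_of_finite hF (congrArg Subtype.val hK)
  refine hbox ⟨fun x hx => ?_, fun U hU' => ?_⟩ hK𝒜
  · rcases (hKF ▸ mem_image_of_mem φ hx : φ x ∈ insert y₀ (range y)) with hx₀ | ⟨U, hxU⟩
    · exact hy₀ hx₀
    · exact (hy U hxU.symm).2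
  · have hyU : y ⟨U, hU'⟩ ∈ φ '' K.1 := hKF ▸ mem_insert_of_mem y₀ (mem_range_self _)
    obtain ⟨x, hxK, hxU⟩ := hyU
    exact ⟨x, hxK, (hy ⟨U, hU'⟩ hxU).1⟩

theorem of_hyperMap (hc : Continuous φ) (h : IrreducibleMap (_root_.hyperMap φ)) :
    IrreducibleMap φ := by
  intro A hA hAne hAφ
  have hsurj : _root_.hyperMap φ '' {K : Hyper X | K.1 ⊆ A} = univ := by
    refine eq_univ_of_forall fun L => ?_
    have himg : φ '' (A ∩ φ ⁻¹' L.1) = L.1 := by rw [image_inter_preimage, hAφ, univ_inter]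
    refine ⟨⟨A ∩ φ ⁻¹' L.1, hA.inter (L.2.1.preimage hc), ?_⟩, inter_subset_left, ?_⟩
    · exact image_nonempty.mp (himg ▸ L.2.2)
    · exact Subtype.ext (by simp only [_root_.hyperMap, himg, L.2.1.closure_eq])
  have hall :=
    h _ (Hyper.isClosed_setOf_subset hA) ⟨⟨A, hA, hAne⟩, fun _ hx => hx⟩ hsurj
  refine eq_univ_of_forall fun x => ?_
  have : (⟨closure {x}, isClosed_closure, singleton_nonempty x |>.closure⟩ : Hyper X) ∈
      {K : Hyper X | K.1 ⊆ A} := hall ▸ mem_univ _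
  exact this (subset_closure rfl)

end IrreducibleMap

theorem irreducibleMap_iff_irreducibleMap_hyperMap_general
    {X Y : Type*} [TopologicalSpace X]
    [TopologicalSpace Y] [T2Space Y]
    {φ : X → Y} (hc : Continuous φ) :
    IrreducibleMap φ ↔ IrreducibleMap (hyperMap φ) :=
  ⟨IrreducibleMap.hyperMap, IrreducibleMap.of_hyperMap hc⟩

/-- Theorem 9B. A continuous surjection `φ : X → Y` of compact Hausdorff spaces is
irreducible iff the induced map `2^φ : 2^X → 2^Y` is irreducible. -/
theorem irreducibleMap_iff_irreducibleMap_hyperMap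
    {X Y : Type*} [TopologicalSpace X] [CompactSpace X] [T2Space X]
    [TopologicalSpace Y] [CompactSpace Y] [T2Space Y]
    {φ : X → Y} (hc : Continuous φ) (hs : Function.Surjective φ) :
    IrreducibleMap φ ↔ IrreducibleMap (hyperMap φ) :=
  irreducibleMap_iff_irreducibleMap_hyperMap_general hc
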